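/- arXiv:2307.09826 — 2 statements merged into one kernel-verified Lean document; each statement's English description precedes it below -/
import Mathlib

section
/- Let V be a vector space over ℂ with ℤ-indexed bilinear products aₙb satisfying weak commutativity (component form), and let P : V → V be an ordinary Rota-Baxter operator of weight λ. Then the derived products a ⋆ₙ b := aₙ(Pb) + (Pa)ₙb + λ·aₙb also satisfy weak commutativity (component form): for all a,b ∈ V there exists N ∈ ℕ such that for all c ∈ V the N-commutativity identity for (⋆,⋆;⋆,⋆) holds at (a,b,c). -/
section Defs

variable {W : Type*} [AddCommGroup W] [Module ℂ W]

/-- The `N`-commutativity identity for `(α,β;γ,δ)` at `(a,b,c)`: the coefficient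
form of `(z₁−z₂)^N α(a,z₁)β(b,z₂)c = (z₁−z₂)^N γ(b,z₂)δ(a,z₁)c`. -/
def NCommId (α β γ δ : ℤ → W → W → W) (N : ℕ) (a b c : W) : Prop :=
  ∀ m n : ℤ,
    ∑ i ∈ Finset.range (N + 1),
        ((-1 : ℂ) ^ i * (N.choose i : ℂ)) • α (m + (N : ℤ) - (i : ℤ)) a (β (n + (i : ℤ)) b c)
      = ∑ i ∈ Finset.range (N + 1),
        ((-1 : ℂ) ^ i * (N.choose i : ℂ)) • γ (n + (i : ℤ)) b (δ (m + (N : ℤ) - (i : ℤ)) a c)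

/-- Weak commutativity in component form. -/
def WeakComm (μ : ℤ → W → W → W) : Prop :=
  ∀ a b : W, ∃ N : ℕ, ∀ c : W, NCommId μ μ μ μ N a b c

end Defs

/-- An ordinary Rota-Baxter operator of weight `lam` on the ℤ-indexed products `μ`. -/
def OrdRBO {V : Type*} [AddCommGroup V] [Module ℂ V]
    (μ : ℤ → V →ₗ[ℂ] V →ₗ[ℂ] V) (P : V →ₗ[ℂ] V) (lam : ℂ) : Prop :=
  ∀ (n : ℤ) (a b : V),
    μ n (P a) (P b) = P (μ n (P a) b) + P (μ n a (P b)) + lam • P (μ n a b)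

/-- The derived products `a ⋆ₙ b = aₙ(Pb) + (Pa)ₙb + lam·aₙb`. -/
def starProd {V : Type*} [AddCommGroup V] [Module ℂ V]
    (μ : ℤ → V →ₗ[ℂ] V →ₗ[ℂ] V) (P : V →ₗ[ℂ] V) (lam : ℂ)
    (n : ℤ) (a b : V) : V :=
  μ n a (P b) + μ n (P a) b + lam • μ n a b

section Aux
variable {W : Type*} [AddCommGroup W] [Module ℂ W]

lemma pascal_sum (f : ℤ → ℤ → W) (N : ℕ) (m n : ℤ) :
    ∑ i ∈ Finset.range (N + 1 + 1),
        ((-1 : ℂ) ^ i * ((N+1).choose i : ℂ)) • f (m + ((N : ℤ)+1) - (i : ℤ)) (n + (i : ℤ))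
    = (∑ i ∈ Finset.range (N + 1),
        ((-1 : ℂ) ^ i * (N.choose i : ℂ)) • f (m + 1 + (N : ℤ) - (i : ℤ)) (n + (i : ℤ)))
      - ∑ i ∈ Finset.range (N + 1),
        ((-1 : ℂ) ^ i * (N.choose i : ℂ)) • f (m + (N : ℤ) - (i : ℤ)) (n + 1 + (i : ℤ)) := by
  rw [Finset.sum_range_succ' _ (N+1)]
  have key : ∀ i ∈ Finset.range (N+1),
      ((-1 : ℂ) ^ (i+1) * ((N+1).choose (i+1) : ℂ)) •
          f (m + ((N : ℤ)+1) - ((i+1 : ℕ) : ℤ)) (n + ((i+1 : ℕ) : ℤ))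
      = ((-1 : ℂ) ^ (i+1) * ((N).choose (i+1) : ℂ)) •
            f (m + 1 + (N : ℤ) - ((i+1 : ℕ) : ℤ)) (n + ((i+1 : ℕ) : ℤ))
        - ((-1 : ℂ) ^ i * (N.choose i : ℂ)) • f (m + (N : ℤ) - (i:ℤ)) (n + 1 + (i : ℤ)) := by
    intro i _
    rw [Nat.choose_succ_succ']
    push_cast
    rw [show m + ((N:ℤ)+1) - ((i:ℤ)+1) = m + 1 + (N:ℤ) - ((i:ℤ)+1) from by ring]
    rw [mul_add, add_smul]
    rw [show m + 1 + (N:ℤ) - ((i:ℤ)+1) = m + (N:ℤ) - (i:ℤ) from by ring,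
        show n + ((i:ℤ)+1) = n + 1 + (i:ℤ) from by ring, pow_succ]
    module
  rw [Finset.sum_congr rfl key, Finset.sum_sub_distrib]
  have htop : ∑ i ∈ Finset.range (N+1),
      ((-1 : ℂ) ^ (i+1) * ((N).choose (i+1) : ℂ)) •
          f (m + 1 + (N : ℤ) - ((i+1 : ℕ) : ℤ)) (n + ((i+1 : ℕ) : ℤ))
      = ∑ i ∈ Finset.range N,
      ((-1 : ℂ) ^ (i+1) * ((N).choose (i+1) : ℂ)) •
          f (m + 1 + (N : ℤ) - ((i+1 : ℕ) : ℤ)) (n + ((i+1 : ℕ) : ℤ)) := by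
    rw [Finset.sum_range_succ, Nat.choose_succ_self]
    simp
  rw [htop]
  rw [Finset.sum_range_succ' (fun i => ((-1 : ℂ) ^ i * (N.choose i : ℂ)) •
      f (m + 1 + (N : ℤ) - (i : ℤ)) (n + (i : ℤ))) N]
  have h0 : ((-1 : ℂ) ^ 0 * (((N+1).choose 0 : ℕ) : ℂ)) •
        f (m + ((N:ℤ)+1) - ((0:ℕ):ℤ)) (n + ((0:ℕ):ℤ))
      = ((-1 : ℂ) ^ 0 * ((N.choose 0 : ℕ) : ℂ)) •
        f (m + 1 + (N:ℤ) - ((0:ℕ):ℤ)) (n + ((0:ℕ):ℤ)) := by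
    norm_num
    rw [show m + ((N:ℤ)+1) = m + 1 + (N:ℤ) from by ring]
  rw [h0]
  abel

lemma ncomm_succ {α β γ δ : ℤ → W → W → W} {N : ℕ} {a b c : W}
    (h : NCommId α β γ δ N a b c) : NCommId α β γ δ (N+1) a b c := by
  intro m n
  have hL := pascal_sum (fun p q => α p a (β q b c)) N m n
  have hR := pascal_sum (fun p q => γ q b (δ p a c)) N m n
  push_cast
  rw [hL, hR, h (m+1) n, h m (n+1)]

lemma ncomm_mono {α β γ δ : ℤ → W → W → W} {N M : ℕ} {a b c : W}
    (hNM : N ≤ M) (h : NCommId α β γ δ N a b c) : NCommId α β γ δ M a b c := by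
  induction M, hNM using Nat.le_induction with
  | base => exact h
  | succ M _ ih => exact ncomm_succ ih

lemma sum_expand (s : Finset ℕ) (c : ℕ → ℂ) (lam : ℂ) (g1 g2 g3 g4 g5 g6 g7 : ℕ → W) :
    ∑ i ∈ s, c i • (g1 i + g2 i + g3 i + lam • g4 i + lam • g5 i + lam • g6 i
        + (lam*lam) • g7 i)
    = (∑ i ∈ s, c i • g1 i) + (∑ i ∈ s, c i • g2 i) + (∑ i ∈ s, c i • g3 i)
      + lam • (∑ i ∈ s, c i • g4 i) + lam • (∑ i ∈ s, c i • g5 i)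
      + lam • (∑ i ∈ s, c i • g6 i) + (lam*lam) • (∑ i ∈ s, c i • g7 i) := by
  simp only [Finset.smul_sum, ← Finset.sum_add_distrib]
  refine Finset.sum_congr rfl fun i _ => ?_
  module

end Aux

/-- If the products `μ` satisfy weak commutativity and `P` is an ordinary
Rota-Baxter operator of weight `lam`, then the derived products `⋆ₙ` also satisfy
weak commutativity. -/
theorem stmt13 {V : Type*} [AddCommGroup V] [Module ℂ V]
    (μ : ℤ → V →ₗ[ℂ] V →ₗ[ℂ] V)
    (hwc : WeakComm (fun n (a b : V) => μ n a b))
    (lam : ℂ) (P : V →ₗ[ℂ] V) (hP : OrdRBO μ P lam) :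
    WeakComm (starProd μ P lam) := by
  have hPstar : ∀ (n : ℤ) (b c : V), P (starProd μ P lam n b c) = μ n (P b) (P c) := by
    intro n b c
    rw [starProd, hP n b c, map_add, map_add, map_smul]
    abel
  have hstar_expand : ∀ (m n : ℤ) (x y z : V),
      starProd μ P lam m x (starProd μ P lam n y z)
      = μ m x (μ n (P y) (P z)) + μ m (P x) (μ n (P y) z) + μ m (P x) (μ n y (P z))
        + lam • μ m (P x) (μ n y z) + lam • μ m x (μ n (P y) z)
        + lam • μ m x (μ n y (P z)) + (lam*lam) • μ m x (μ n y z) := by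
    intro m n x y z
    rw [show starProd μ P lam m x (starProd μ P lam n y z)
        = μ m x (P (starProd μ P lam n y z)) + μ m (P x) (starProd μ P lam n y z)
          + lam • μ m x (starProd μ P lam n y z) from rfl]
    rw [hPstar, starProd, map_add, map_add, map_smul, map_add, map_add, map_smul]
    module
  intro a b
  obtain ⟨N1, h1⟩ := hwc a b
  obtain ⟨N2, h2⟩ := hwc a (P b)
  obtain ⟨N3, h3⟩ := hwc (P a) b
  obtain ⟨N4, h4⟩ := hwc (P a) (P b)
  refine ⟨max (max N1 N2) (max N3 N4), fun c => ?_⟩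
  set N := max (max N1 N2) (max N3 N4) with hN
  have H1 : ∀ c : V, NCommId (fun n (a b : V) => μ n a b) _ _ _ N a b c :=
    fun c => ncomm_mono (le_trans (le_max_left _ _) (le_max_left _ _)) (h1 c)
  have H2 : ∀ c : V, NCommId (fun n (a b : V) => μ n a b) _ _ _ N a (P b) c :=
    fun c => ncomm_mono (le_trans (le_max_right _ _) (le_max_left _ _)) (h2 c)
  have H3 : ∀ c : V, NCommId (fun n (a b : V) => μ n a b) _ _ _ N (P a) b c :=
    fun c => ncomm_mono (le_trans (le_max_left _ _) (le_max_right _ _)) (h3 c)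
  have H4 : ∀ c : V, NCommId (fun n (a b : V) => μ n a b) _ _ _ N (P a) (P b) c :=
    fun c => ncomm_mono (le_trans (le_max_right _ _) (le_max_right _ _)) (h4 c)
  intro m n
  have E1 := H2 (P c) m n
  have E2 := H4 c m n
  have E3 := H3 (P c) m n
  have E4 := H3 c m n
  have E5 := H2 c m n
  have E6 := H1 (P c) m n
  have E7 := H1 c m n
  simp only [] at E1 E2 E3 E4 E5 E6 E7
  simp only [hstar_expand]
  rw [sum_expand, sum_expand, E1, E2, E3, E4, E5, E6, E7]
  abel
end

section
/- Let V be a vector space over ℂ with ℤ-indexed bilinear products aₙb satisfying truncation and weak associativity (component forms), and let P : V → V be an ordinary Rota-Baxter operator of weight λ. Then the derived products a ⋆ₙ b := aₙ(Pb) + (Pa)ₙb + λ·aₙb also satisfy truncation and weak associativity (component form): for all a,c ∈ V there exists N ∈ ℕ such that for all b ∈ V the N-associativity identity for (⋆,⋆;⋆,⋆) holds at (a,b,c). -/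
section Defs

variable {W : Type*} [AddCommGroup W] [Module ℂ W]

/-- Truncation: for all `a, b` the products `aₙb` vanish for `n` large. -/
def Truncation (μ : ℤ → W → W → W) : Prop :=
  ∀ a b : W, ∃ N : ℤ, ∀ n ≥ N, μ n a b = 0

/-- The generalized binomial coefficient `B(x,j) = x(x−1)⋯(x−j+1)/j!`. -/
noncomputable def genBinom (x : ℂ) (j : ℕ) : ℂ :=
  (∏ i ∈ Finset.range j, (x - (i : ℂ))) / (j.factorial : ℂ)

/-- The `N`-associativity identity for `(α,β;γ,δ)` at `(a,b,c)`: the coefficient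
form of `(z₀+z₂)^N β(α(a,z₀)b,z₂)c = (z₀+z₂)^N γ(a,z₀+z₂)δ(b,z₂)c`, where the
right-hand sum over `m ∈ ℤ, m ≤ N+p` is reindexed by `m ↦ N+p−m` with `m ∈ ℕ`. -/
def NAssocId (α β γ δ : ℤ → W → W → W) (N : ℕ) (a b c : W) : Prop :=
  ∀ p q : ℤ,
    ∑ i ∈ Finset.range (N + 1),
        (N.choose i : ℂ) • β (q + (N : ℤ) - (i : ℤ)) (α (p + (i : ℤ)) a b) c
      = ∑ᶠ m : ℕ,
        genBinom ((m : ℂ) - (p : ℂ) - 1) m • γ ((N : ℤ) + p - (m : ℤ)) a (δ (q + (m : ℤ)) b c)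

/-- Weak associativity in component form. -/
def WeakAssoc (μ : ℤ → W → W → W) : Prop :=
  ∀ a c : W, ∃ N : ℕ, ∀ b : W, NAssocId μ μ μ μ N a b c

end Defs

lemma genBinom_zero (x : ℂ) : genBinom x 0 = 1 := by simp [genBinom]

lemma genBinom_pascal (x : ℂ) (m : ℕ) :
    genBinom x m + genBinom x (m + 1) = genBinom (x + 1) (m + 1) := by
  have hfac : ((m + 1).factorial : ℂ) = ((m:ℂ) + 1) * m.factorial := by
    push_cast [Nat.factorial_succ]; ring
  have hm : (m.factorial : ℂ) ≠ 0 := Nat.cast_ne_zero.2 (Nat.factorial_ne_zero m)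
  have hm1 : ((m:ℂ) + 1) ≠ 0 := Nat.cast_add_one_ne_zero m
  have h1 : ∏ i ∈ Finset.range (m+1), (x + 1 - (i:ℂ))
      = (∏ i ∈ Finset.range m, (x - (i:ℂ))) * (x + 1) := by
    rw [Finset.prod_range_succ']
    congr 1
    · exact Finset.prod_congr rfl fun i _ => by push_cast; ring
    · push_cast; ring
  rw [genBinom, genBinom, genBinom, Finset.prod_range_succ, h1, hfac]
  field_simp
  ring

section Aux
variable {V : Type*} [AddCommGroup V] [Module ℂ V]

lemma aux_lhs (N : ℕ) (Z : ℕ → V) :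
    ∑ i ∈ Finset.range (N+1+1), (((N+1).choose i : ℕ) : ℂ) • Z i
    = (∑ i ∈ Finset.range (N+1), ((N.choose i : ℕ):ℂ) • Z i)
      + ∑ i ∈ Finset.range (N+1), ((N.choose i : ℕ):ℂ) • Z (i+1) := by
  have h2 : (∑ i ∈ Finset.range (N+1), ((N.choose (i+1) : ℕ):ℂ) • Z (i+1))
      + ((N.choose 0 : ℕ):ℂ) • Z 0 = ∑ i ∈ Finset.range (N+1), ((N.choose i:ℕ):ℂ) • Z i := by
    rw [← Finset.sum_range_succ' (fun i => ((N.choose i:ℕ):ℂ) • Z i) (N+1),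
      Finset.sum_range_succ]
    simp [Nat.choose_succ_self]
  rw [Finset.sum_range_succ' _ (N+1)]
  have hterm : ∀ i, (((N+1).choose (i+1) : ℕ):ℂ) • Z (i+1)
      = ((N.choose i:ℕ):ℂ) • Z (i+1) + ((N.choose (i+1):ℕ):ℂ) • Z (i+1) := by
    intro i
    rw [Nat.choose_succ_succ, Nat.cast_add, add_smul]
  rw [Finset.sum_congr rfl fun i _ => hterm i, Finset.sum_add_distrib,
    show (((N+1).choose 0 : ℕ):ℂ) = ((N.choose 0 : ℕ):ℂ) by norm_num, ← h2]
  abel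

lemma aux_rhs' (p' : ℂ) (n : ℕ) (X : ℕ → V) :
    (∑ m ∈ Finset.range n, genBinom ((m:ℂ) - p' - 1) m • X (m+1))
      + ∑ m ∈ Finset.range n, genBinom ((m:ℂ) - p' - 2) m • X m
    = (∑ m ∈ Finset.range n, genBinom ((m:ℂ) - p' - 1) m • X m)
      + (genBinom ((n:ℂ) - p' - 1) n - genBinom ((n:ℂ) - p' - 2) n) • X n := by
  induction n with
  | zero => simp [genBinom_zero]
  | succ n ih =>
    rw [Finset.sum_range_succ, Finset.sum_range_succ, Finset.sum_range_succ]
    have hp : genBinom (((n+1:ℕ):ℂ) - p' - 1) (n+1)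
        = genBinom ((n:ℂ) - p' - 1) n + genBinom (((n+1:ℕ):ℂ) - p' - 2) (n+1) := by
      have h := genBinom_pascal ((n:ℂ) - p' - 1) n
      rw [show ((n:ℂ) - p' - 1) + 1 = ((n+1:ℕ):ℂ) - p' - 1 by push_cast; ring] at h
      rw [show ((n+1:ℕ):ℂ) - p' - 2 = (n:ℂ) - p' - 1 by push_cast; ring]
      linear_combination -h
    rw [hp]
    rw [show (∑ m ∈ Finset.range n, genBinom ((m:ℂ) - p' - 1) m • X (m+1)) =
      (∑ m ∈ Finset.range n, genBinom ((m:ℂ) - p' - 1) m • X m)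
      + (genBinom ((n:ℂ) - p' - 1) n - genBinom ((n:ℂ) - p' - 2) n) • X n
      - ∑ m ∈ Finset.range n, genBinom ((m:ℂ) - p' - 2) m • X m by
        rw [← ih]; abel]
    module

lemma aux_rhs (p' : ℂ) (n : ℕ) (X : ℕ → V) (hX : X n = 0) :
    (∑ m ∈ Finset.range n, genBinom ((m:ℂ) - p' - 1) m • X (m+1))
      + ∑ m ∈ Finset.range n, genBinom ((m:ℂ) - p' - 2) m • X m
    = ∑ m ∈ Finset.range n, genBinom ((m:ℂ) - p' - 1) m • X m := by
  rw [aux_rhs', hX, smul_zero, add_zero]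

lemma finsum_nat_eq_sum_range {M : Type*} [AddCommMonoid M] (f : ℕ → M) (n : ℕ)
    (h : ∀ m, n ≤ m → f m = 0) : ∑ᶠ m, f m = ∑ m ∈ Finset.range n, f m := by
  apply finsum_eq_sum_of_support_subset
  intro m hm
  simp only [Finset.coe_range, Set.mem_Iio]
  by_contra hmn
  exact hm (h m (le_of_not_gt hmn))

end Aux

lemma nassoc_succ {V : Type*} [AddCommGroup V] [Module ℂ V]
    (μ : ℤ → V →ₗ[ℂ] V →ₗ[ℂ] V) (a b c : V) (K : ℤ)
    (hK : ∀ n ≥ K, μ n b c = 0) (N : ℕ)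
    (h : NAssocId (fun n (a b : V) => μ n a b) (fun n a b => μ n a b)
      (fun n a b => μ n a b) (fun n a b => μ n a b) N a b c) :
    NAssocId (fun n (a b : V) => μ n a b) (fun n a b => μ n a b)
      (fun n a b => μ n a b) (fun n a b => μ n a b) (N + 1) a b c := by
  intro p q
  beta_reduce
  set M : ℕ := (K - q).toNat + 1 with hMdef
  have hgoal : ∀ m : ℕ, M ≤ m → genBinom ((m:ℂ) - (p:ℂ) - 1) m •
      μ (((N+1:ℕ):ℤ) + p - (m:ℤ)) a (μ (q + (m:ℤ)) b c) = 0 := by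
    intro m hm
    rw [hK (q + (m:ℤ)) (by omega), map_zero, smul_zero]
  rw [finsum_nat_eq_sum_range _ M hgoal]
  have h1 := h p (q+1)
  beta_reduce at h1
  have hsup1 : ∀ m : ℕ, M ≤ m → genBinom ((m:ℂ) - (p:ℂ) - 1) m •
      μ ((N:ℤ) + p - (m:ℤ)) a (μ (q + 1 + (m:ℤ)) b c) = 0 := by
    intro m hm
    rw [hK (q + 1 + (m:ℤ)) (by omega), map_zero, smul_zero]
  rw [finsum_nat_eq_sum_range _ M hsup1] at h1
  have h2 := h (p+1) q
  beta_reduce at h2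
  have hsup2 : ∀ m : ℕ, M ≤ m → genBinom ((m:ℂ) - ((p+1:ℤ):ℂ) - 1) m •
      μ ((N:ℤ) + (p+1) - (m:ℤ)) a (μ (q + (m:ℤ)) b c) = 0 := by
    intro m hm
    rw [hK (q + (m:ℤ)) (by omega), map_zero, smul_zero]
  rw [finsum_nat_eq_sum_range _ M hsup2] at h2
  have hXM : μ (((N+1:ℕ):ℤ) + p - (M:ℤ)) a (μ (q + (M:ℤ)) b c) = 0 := by
    rw [hK (q + (M:ℤ)) (by omega), map_zero]
  calc
    ∑ i ∈ Finset.range (N + 1 + 1), (((N+1).choose i : ℕ) : ℂ) •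
        μ (q + ((N+1:ℕ):ℤ) - (i:ℤ)) (μ (p + (i:ℤ)) a b) c
      = (∑ i ∈ Finset.range (N+1), ((N.choose i : ℕ):ℂ) •
            μ (q + ((N+1:ℕ):ℤ) - (i:ℤ)) (μ (p + (i:ℤ)) a b) c)
        + ∑ i ∈ Finset.range (N+1), ((N.choose i : ℕ):ℂ) •
            μ (q + ((N+1:ℕ):ℤ) - ((i+1:ℕ):ℤ)) (μ (p + ((i+1:ℕ):ℤ)) a b) c :=
      aux_lhs N (fun i => μ (q + ((N+1:ℕ):ℤ) - (i:ℤ)) (μ (p + (i:ℤ)) a b) c)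
    _ = (∑ i ∈ Finset.range (N+1), ((N.choose i : ℕ):ℂ) •
            μ (q + 1 + (N:ℤ) - (i:ℤ)) (μ (p + (i:ℤ)) a b) c)
        + ∑ i ∈ Finset.range (N+1), ((N.choose i : ℕ):ℂ) •
            μ (q + (N:ℤ) - (i:ℤ)) (μ (p + 1 + (i:ℤ)) a b) c := by
      congr 1
      · refine Finset.sum_congr rfl fun i _ => ?_
        rw [show q + ((N+1:ℕ):ℤ) - (i:ℤ) = q + 1 + (N:ℤ) - (i:ℤ) by push_cast; ring]
      · refine Finset.sum_congr rfl fun i _ => ?_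
        rw [show q + ((N+1:ℕ):ℤ) - ((i+1:ℕ):ℤ) = q + (N:ℤ) - (i:ℤ) by push_cast; ring,
            show p + ((i+1:ℕ):ℤ) = p + 1 + (i:ℤ) by push_cast; ring]
    _ = (∑ m ∈ Finset.range M, genBinom ((m:ℂ) - (p:ℂ) - 1) m •
            μ ((N:ℤ) + p - (m:ℤ)) a (μ (q + 1 + (m:ℤ)) b c))
        + ∑ m ∈ Finset.range M, genBinom ((m:ℂ) - ((p+1:ℤ):ℂ) - 1) m •
            μ ((N:ℤ) + (p+1) - (m:ℤ)) a (μ (q + (m:ℤ)) b c) := by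
      rw [h1, h2]
    _ = (∑ m ∈ Finset.range M, genBinom ((m:ℂ) - (p:ℂ) - 1) m •
            μ (((N+1:ℕ):ℤ) + p - ((m+1:ℕ):ℤ)) a (μ (q + ((m+1:ℕ):ℤ)) b c))
        + ∑ m ∈ Finset.range M, genBinom ((m:ℂ) - (p:ℂ) - 2) m •
            μ (((N+1:ℕ):ℤ) + p - (m:ℤ)) a (μ (q + (m:ℤ)) b c) := by
      congr 1
      · refine Finset.sum_congr rfl fun m _ => ?_
        rw [show (N:ℤ) + p - (m:ℤ) = ((N+1:ℕ):ℤ) + p - ((m+1:ℕ):ℤ) by push_cast; ring,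
            show q + 1 + (m:ℤ) = q + ((m+1:ℕ):ℤ) by push_cast; ring]
      · refine Finset.sum_congr rfl fun m _ => ?_
        rw [show ((m:ℂ) - ((p+1:ℤ):ℂ) - 1) = (m:ℂ) - (p:ℂ) - 2 by push_cast; ring,
            show (N:ℤ) + (p+1) - (m:ℤ) = ((N+1:ℕ):ℤ) + p - (m:ℤ) by push_cast; ring]
    _ = ∑ m ∈ Finset.range M, genBinom ((m:ℂ) - (p:ℂ) - 1) m •
            μ (((N+1:ℕ):ℤ) + p - (m:ℤ)) a (μ (q + (m:ℤ)) b c) :=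
      aux_rhs (p:ℂ) M (fun m => μ (((N+1:ℕ):ℤ) + p - (m:ℤ)) a (μ (q + (m:ℤ)) b c)) hXM

lemma nassoc_le {V : Type*} [AddCommGroup V] [Module ℂ V]
    (μ : ℤ → V →ₗ[ℂ] V →ₗ[ℂ] V) (a b c : V) (K : ℤ)
    (hK : ∀ n ≥ K, μ n b c = 0) (N N' : ℕ) (hNN : N ≤ N')
    (h : NAssocId (fun n (a b : V) => μ n a b) (fun n a b => μ n a b)
      (fun n a b => μ n a b) (fun n a b => μ n a b) N a b c) :
    NAssocId (fun n (a b : V) => μ n a b) (fun n a b => μ n a b)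
      (fun n a b => μ n a b) (fun n a b => μ n a b) N' a b c := by
  induction N' , hNN using Nat.le_induction with
  | base => exact h
  | succ n hn ih => exact nassoc_succ μ a b c K hK n ih
section StarExp
variable {V : Type*} [AddCommGroup V] [Module ℂ V]
  (μ : ℤ → V →ₗ[ℂ] V →ₗ[ℂ] V) (P : V →ₗ[ℂ] V) (lam : ℂ)

lemma star_a_zero (n : ℤ) (a : V) : starProd μ P lam n a 0 = 0 := by
  simp [starProd]

lemma star_left (hP : OrdRBO μ P lam) (k j : ℤ) (a b c : V) :
    starProd μ P lam k (starProd μ P lam j a b) c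
    = μ k (μ j a (P b)) (P c) + μ k (μ j (P a) b) (P c)
      + lam • μ k (μ j a b) (P c) + μ k (μ j (P a) (P b)) c
      + lam • μ k (μ j a (P b)) c + lam • μ k (μ j (P a) b) c
      + (lam * lam) • μ k (μ j a b) c := by
  have hPj : P (μ j a (P b) + μ j (P a) b + lam • μ j a b) = μ j (P a) (P b) := by
    rw [map_add, map_add, map_smul, hP j a b]; module
  simp only [starProd]
  rw [hPj]
  simp only [map_add, map_smul, LinearMap.add_apply, LinearMap.smul_apply]
  module

lemma star_right (hP : OrdRBO μ P lam) (n j : ℤ) (a b c : V) :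
    starProd μ P lam n a (starProd μ P lam j b c)
    = μ n a (μ j (P b) (P c)) + μ n (P a) (μ j b (P c))
      + lam • μ n a (μ j b (P c)) + μ n (P a) (μ j (P b) c)
      + lam • μ n a (μ j (P b) c) + lam • μ n (P a) (μ j b c)
      + (lam * lam) • μ n a (μ j b c) := by
  have hPj : P (μ j b (P c) + μ j (P b) c + lam • μ j b c) = μ j (P b) (P c) := by
    rw [map_add, map_add, map_smul, hP j b c]; module
  simp only [starProd]
  rw [hPj]
  simp only [map_add, map_smul, LinearMap.add_apply, LinearMap.smul_apply]
  module

end StarExp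

/-- If the products `μ` satisfy truncation and weak associativity and `P` is an
ordinary Rota-Baxter operator of weight `lam`, then the derived products `⋆ₙ`
also satisfy truncation and weak associativity. -/
theorem stmt14 {V : Type*} [AddCommGroup V] [Module ℂ V]
    (μ : ℤ → V →ₗ[ℂ] V →ₗ[ℂ] V)
    (htr : Truncation (fun n (a b : V) => μ n a b))
    (hwa : WeakAssoc (fun n (a b : V) => μ n a b))
    (lam : ℂ) (P : V →ₗ[ℂ] V) (hP : OrdRBO μ P lam) :
    Truncation (starProd μ P lam) ∧ WeakAssoc (starProd μ P lam) := by
  constructor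
  · -- Truncation
    intro a b
    obtain ⟨K1, h1⟩ := htr a (P b)
    obtain ⟨K2, h2⟩ := htr (P a) b
    obtain ⟨K3, h3⟩ := htr a b
    refine ⟨max (max K1 K2) K3, fun n hn => ?_⟩
    have e1 : μ n a (P b) = 0 := h1 n (by omega)
    have e2 : μ n (P a) b = 0 := h2 n (by omega)
    have e3 : μ n a b = 0 := h3 n (by omega)
    show μ n a (P b) + μ n (P a) b + lam • μ n a b = 0
    rw [e1, e2, e3, smul_zero, add_zero, add_zero]
  · -- Weak associativity
    intro a c
    obtain ⟨N1, hN1⟩ := hwa a (P c)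
    obtain ⟨N2, hN2⟩ := hwa (P a) (P c)
    obtain ⟨N3, hN3⟩ := hwa (P a) c
    obtain ⟨N4, hN4⟩ := hwa a c
    refine ⟨max (max N1 N2) (max N3 N4), fun b => ?_⟩
    set N : ℕ := max (max N1 N2) (max N3 N4) with hNdef
    intro p q
    obtain ⟨K1, hK1⟩ := htr b (P c)
    obtain ⟨K2, hK2⟩ := htr (P b) c
    obtain ⟨K3, hK3⟩ := htr b c
    obtain ⟨K4, hK4⟩ := htr (P b) (P c)
    set M : ℕ := (max (max K1 K2) (max K3 K4) - q).toNat with hMdef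
    -- generic support bound
    have hsup : ∀ (x y z : V) (K' : ℤ), (∀ n ≥ K', μ n y z = 0) →
        ((M:ℤ) + q ≥ K') → ∀ m : ℕ, M ≤ m →
        genBinom ((m:ℂ) - (p:ℂ) - 1) m • μ ((N:ℤ) + p - (m:ℤ)) x (μ (q + (m:ℤ)) y z) = 0 := by
      intro x y z K' hK' hMK m hm
      rw [hK' (q + (m:ℤ)) (by omega), map_zero, smul_zero]
    -- the seven instances, lifted to level N and with finsums converted
    have e1 := nassoc_le μ a (P b) (P c) K4 hK4 N1 N (by omega) (hN1 (P b)) p q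
    have e2 := nassoc_le μ (P a) b (P c) K1 hK1 N2 N (by omega) (hN2 b) p q
    have e3 := nassoc_le μ a b (P c) K1 hK1 N1 N (by omega) (hN1 b) p q
    have e4 := nassoc_le μ (P a) (P b) c K2 hK2 N3 N (by omega) (hN3 (P b)) p q
    have e5 := nassoc_le μ a (P b) c K2 hK2 N4 N (by omega) (hN4 (P b)) p q
    have e6 := nassoc_le μ (P a) b c K3 hK3 N3 N (by omega) (hN3 b) p q
    have e7 := nassoc_le μ a b c K3 hK3 N4 N (by omega) (hN4 b) p q
    beta_reduce at e1 e2 e3 e4 e5 e6 e7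
    rw [finsum_nat_eq_sum_range _ M (hsup a (P b) (P c) K4 hK4 (by omega))] at e1
    rw [finsum_nat_eq_sum_range _ M (hsup (P a) b (P c) K1 hK1 (by omega))] at e2
    rw [finsum_nat_eq_sum_range _ M (hsup a b (P c) K1 hK1 (by omega))] at e3
    rw [finsum_nat_eq_sum_range _ M (hsup (P a) (P b) c K2 hK2 (by omega))] at e4
    rw [finsum_nat_eq_sum_range _ M (hsup a (P b) c K2 hK2 (by omega))] at e5
    rw [finsum_nat_eq_sum_range _ M (hsup (P a) b c K3 hK3 (by omega))] at e6
    rw [finsum_nat_eq_sum_range _ M (hsup a b c K3 hK3 (by omega))] at e7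
    -- convert the goal's finsum
    have hgsup : ∀ m : ℕ, M ≤ m → genBinom ((m:ℂ) - (p:ℂ) - 1) m •
        starProd μ P lam ((N:ℤ) + p - (m:ℤ)) a (starProd μ P lam (q + (m:ℤ)) b c) = 0 := by
      intro m hm
      have hz : starProd μ P lam (q + (m:ℤ)) b c = 0 := by
        have f1 : μ (q + (m:ℤ)) b (P c) = 0 := hK1 _ (by omega)
        have f2 : μ (q + (m:ℤ)) (P b) c = 0 := hK2 _ (by omega)
        have f3 : μ (q + (m:ℤ)) b c = 0 := hK3 _ (by omega)
        show μ (q + (m:ℤ)) b (P c) + μ (q + (m:ℤ)) (P b) c + lam • μ (q + (m:ℤ)) b c = 0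
        rw [f1, f2, f3, smul_zero, add_zero, add_zero]
      rw [hz, star_a_zero, smul_zero]
    rw [finsum_nat_eq_sum_range _ M hgsup]
    -- expand the left-hand side
    have hSL : ∑ i ∈ Finset.range (N + 1), ((N.choose i : ℕ) : ℂ) •
          starProd μ P lam (q + (N:ℤ) - (i:ℤ)) (starProd μ P lam (p + (i:ℤ)) a b) c
        = (∑ i ∈ Finset.range (N + 1), ((N.choose i : ℕ) : ℂ) •
              μ (q + (N:ℤ) - (i:ℤ)) (μ (p + (i:ℤ)) a (P b)) (P c))
          + (∑ i ∈ Finset.range (N + 1), ((N.choose i : ℕ) : ℂ) •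
              μ (q + (N:ℤ) - (i:ℤ)) (μ (p + (i:ℤ)) (P a) b) (P c))
          + lam • (∑ i ∈ Finset.range (N + 1), ((N.choose i : ℕ) : ℂ) •
              μ (q + (N:ℤ) - (i:ℤ)) (μ (p + (i:ℤ)) a b) (P c))
          + (∑ i ∈ Finset.range (N + 1), ((N.choose i : ℕ) : ℂ) •
              μ (q + (N:ℤ) - (i:ℤ)) (μ (p + (i:ℤ)) (P a) (P b)) c)
          + lam • (∑ i ∈ Finset.range (N + 1), ((N.choose i : ℕ) : ℂ) •
              μ (q + (N:ℤ) - (i:ℤ)) (μ (p + (i:ℤ)) a (P b)) c)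
          + lam • (∑ i ∈ Finset.range (N + 1), ((N.choose i : ℕ) : ℂ) •
              μ (q + (N:ℤ) - (i:ℤ)) (μ (p + (i:ℤ)) (P a) b) c)
          + (lam * lam) • (∑ i ∈ Finset.range (N + 1), ((N.choose i : ℕ) : ℂ) •
              μ (q + (N:ℤ) - (i:ℤ)) (μ (p + (i:ℤ)) a b) c) := by
      rw [Finset.smul_sum, Finset.smul_sum, Finset.smul_sum, Finset.smul_sum,
        ← Finset.sum_add_distrib, ← Finset.sum_add_distrib, ← Finset.sum_add_distrib,
        ← Finset.sum_add_distrib, ← Finset.sum_add_distrib, ← Finset.sum_add_distrib]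
      refine Finset.sum_congr rfl fun i _ => ?_
      rw [star_left μ P lam hP]
      module
    -- expand the right-hand side
    have hSR : ∑ m ∈ Finset.range M, genBinom ((m:ℂ) - (p:ℂ) - 1) m •
          starProd μ P lam ((N:ℤ) + p - (m:ℤ)) a (starProd μ P lam (q + (m:ℤ)) b c)
        = (∑ m ∈ Finset.range M, genBinom ((m:ℂ) - (p:ℂ) - 1) m •
              μ ((N:ℤ) + p - (m:ℤ)) a (μ (q + (m:ℤ)) (P b) (P c)))
          + (∑ m ∈ Finset.range M, genBinom ((m:ℂ) - (p:ℂ) - 1) m •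
              μ ((N:ℤ) + p - (m:ℤ)) (P a) (μ (q + (m:ℤ)) b (P c)))
          + lam • (∑ m ∈ Finset.range M, genBinom ((m:ℂ) - (p:ℂ) - 1) m •
              μ ((N:ℤ) + p - (m:ℤ)) a (μ (q + (m:ℤ)) b (P c)))
          + (∑ m ∈ Finset.range M, genBinom ((m:ℂ) - (p:ℂ) - 1) m •
              μ ((N:ℤ) + p - (m:ℤ)) (P a) (μ (q + (m:ℤ)) (P b) c))
          + lam • (∑ m ∈ Finset.range M, genBinom ((m:ℂ) - (p:ℂ) - 1) m •
              μ ((N:ℤ) + p - (m:ℤ)) a (μ (q + (m:ℤ)) (P b) c))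
          + lam • (∑ m ∈ Finset.range M, genBinom ((m:ℂ) - (p:ℂ) - 1) m •
              μ ((N:ℤ) + p - (m:ℤ)) (P a) (μ (q + (m:ℤ)) b c))
          + (lam * lam) • (∑ m ∈ Finset.range M, genBinom ((m:ℂ) - (p:ℂ) - 1) m •
              μ ((N:ℤ) + p - (m:ℤ)) a (μ (q + (m:ℤ)) b c)) := by
      rw [Finset.smul_sum, Finset.smul_sum, Finset.smul_sum, Finset.smul_sum,
        ← Finset.sum_add_distrib, ← Finset.sum_add_distrib, ← Finset.sum_add_distrib,
        ← Finset.sum_add_distrib, ← Finset.sum_add_distrib, ← Finset.sum_add_distrib]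
      refine Finset.sum_congr rfl fun m _ => ?_
      rw [star_right μ P lam hP]
      module
    rw [hSL, hSR, e1, e2, e3, e4, e5, e6, e7]
end
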